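/- arXiv:math/0612039 — 3 statements merged into one kernel-verified Lean document; each statement's English description precedes it below -/
import Mathlib

section
/- There is no pair of C³ planar curves Γ_0, Γ_1 (parametrized by arclength, with C¹ radius of curvature ρ and chord-tangent angles α_0, α_1 ∈ (0,π)) for which the identity ρ(s_0) sin α_0 + ρ(s_1) sin α_1 = 2 l(s_0,s_1) holds for all s_0 ∈ Γ_0, s_1 ∈ Γ_1 on open intervals. -/
/-!
Write `u` for the unit chord from `γ₀ s₀` to `γ₁ s₁` and `Tᵢ` for the unit tangents. As
`|cos αᵢ| < 1` on a connected domain, `sin αᵢ = εᵢ ⟪rot Tᵢ, u⟫` with constant signs `εᵢ = ±1`.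
Differentiating the identity in `s₀` and then in `s₁`, the Frenet equations `Tᵢ' = κᵢ • rot Tᵢ`
and `ρᵢ κᵢ = 1` eliminate the chord and leave
`(4 - ε₀ + ε₁) cos θ = (ε₀ ρ₀'(s₀) + ε₁ ρ₁'(s₁)) sin θ`, `θ` the angle between `T₁` and `T₀`.
So `cot θ` splits as `f s₀ + g s₁`. But `∂cot θ/∂s₁ = κ₁ / sin² θ`, so `sin² θ` does not depend
on `s₀`; as `∂sin² θ/∂s₀ = 2 κ₀ sin θ cos θ` this forces `cos θ ≡ 0`, and then
`∂cos θ/∂s₀ = -κ₀ sin θ` vanishes although `sin² θ = 1`.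
-/

open scoped RealInnerProductSpace
open Set

noncomputable def rot (v : EuclideanSpace ℝ (Fin 2)) : EuclideanSpace ℝ (Fin 2) :=
  WithLp.toLp 2 ![-(v 1), v 0]

open Filter Topology

local notation "ℝ²" => EuclideanSpace ℝ (Fin 2)

@[simp] lemma rot_apply_zero (v : ℝ²) : rot v 0 = -v 1 := rfl

@[simp] lemma rot_apply_one (v : ℝ²) : rot v 1 = v 0 := rfl

lemma inner_eq_fin_two (v w : ℝ²) : ⟪v, w⟫ = v 0 * w 0 + v 1 * w 1 := by
  simp [PiLp.inner_apply, Fin.sum_univ_two, mul_comm]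

noncomputable def rotCLM : ℝ² →L[ℝ] ℝ² :=
  LinearMap.toContinuousLinearMap
    { toFun := rot
      map_add' := fun v w => by ext i; fin_cases i <;> simp [add_comm]
      map_smul' := fun c v => by ext i; fin_cases i <;> simp }

lemma rot_smul (c : ℝ) (v : ℝ²) : rot (c • v) = c • rot v := rotCLM.map_smul c v

lemma rot_rot (v : ℝ²) : rot (rot v) = -v := by
  ext i; fin_cases i <;> simp

lemma inner_rot_self (v : ℝ²) : ⟪rot v, v⟫ = 0 := by
  simp only [inner_eq_fin_two, rot_apply_zero, rot_apply_one]; ring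

lemma inner_rot_rot (v w : ℝ²) : ⟪rot v, rot w⟫ = ⟪v, w⟫ := by
  simp only [inner_eq_fin_two, rot_apply_zero, rot_apply_one]; ring

lemma inner_rot_left (v w : ℝ²) : ⟪rot v, w⟫ = -⟪v, rot w⟫ := by
  simp only [inner_eq_fin_two, rot_apply_zero, rot_apply_one]; ring

lemma inner_sq_add_inner_rot_sq (u v : ℝ²) : ⟪u, v⟫ ^ 2 + ⟪rot u, v⟫ ^ 2 = ‖u‖ ^ 2 * ‖v‖ ^ 2 := by
  simp only [← real_inner_self_eq_norm_sq, inner_eq_fin_two, rot_apply_zero, rot_apply_one]; ring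

lemma eq_inner_rot_smul_rot {u v : ℝ²} (hu : ‖u‖ = 1) (huv : ⟪u, v⟫ = 0) :
    v = ⟪rot u, v⟫ • rot u := by
  have hu2 : u 0 * u 0 + u 1 * u 1 = 1 := by
    rw [← inner_eq_fin_two, real_inner_self_eq_norm_sq, hu, one_pow]
  rw [inner_eq_fin_two] at huv
  ext i; fin_cases i <;> simp [inner_eq_fin_two]
  · linear_combination (-(v 0)) * hu2 + u 0 * huv
  · linear_combination (-(v 1)) * hu2 + u 1 * huv

lemma hasDerivAt_rot {f : ℝ → ℝ²} {f' : ℝ²} {t : ℝ} (hf : HasDerivAt f f' t) :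
    HasDerivAt (fun s => rot (f s)) (rot f') t :=
  rotCLM.hasFDerivAt.comp_hasDerivAt t hf

section Calculus

variable {F : Type*} [NormedAddCommGroup F] [InnerProductSpace ℝ F]

lemma HasDerivAt.norm_of_ne_zero {w : ℝ → F} {w' : F} {t : ℝ} (hw : HasDerivAt w w' t)
    (h0 : w t ≠ 0) : HasDerivAt (fun s => ‖w s‖) ⟪w', ‖w t‖⁻¹ • w t⟫ t := by
  have hn : ‖w t‖ ≠ 0 := norm_ne_zero_iff.2 h0
  convert hw.norm_sq.sqrt (pow_ne_zero 2 hn) using 1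
  · simp [Real.sqrt_sq (norm_nonneg _)]
  · rw [Real.sqrt_sq (norm_nonneg _), real_inner_smul_right, real_inner_comm]
    field_simp

lemma HasDerivAt.inv_norm_smul {w : ℝ → F} {w' : F} {t : ℝ} (hw : HasDerivAt w w' t)
    (h0 : w t ≠ 0) :
    HasDerivAt (fun s => ‖w s‖⁻¹ • w s)
      (‖w t‖⁻¹ • (w' - ⟪w', ‖w t‖⁻¹ • w t⟫ • ‖w t‖⁻¹ • w t)) t := by
  have hn : ‖w t‖ ≠ 0 := norm_ne_zero_iff.2 h0
  refine (((hw.norm_of_ne_zero h0).inv hn).smul hw).congr_deriv ?_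
  rw [smul_sub, smul_smul, smul_smul, sub_eq_add_neg, ← neg_smul, real_inner_smul_right]
  congr 2
  field_simp

lemma HasDerivAt.eq_of_eventuallyEq {f g : ℝ → ℝ} {f' g' t : ℝ} (hf : HasDerivAt f f' t)
    (hg : HasDerivAt g g' t) (hfg : f =ᶠ[𝓝 t] g) : f' = g' :=
  hf.unique (hg.congr_of_eventuallyEq hfg)

end Calculus

lemma HasDerivAt.inner_of_frenet {T V : ℝ → ℝ²} {V' : ℝ²} {k t : ℝ}
    (hT : HasDerivAt T (k • rot (T t)) t) (hV : HasDerivAt V V' t) :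
    HasDerivAt (fun s => ⟪T s, V s⟫) (k * ⟪rot (T t), V t⟫ + ⟪T t, V'⟫) t := by
  refine (hT.inner ℝ hV).congr_deriv ?_
  rw [real_inner_smul_left]; ring

lemma HasDerivAt.inner_rot_of_frenet {T V : ℝ → ℝ²} {V' : ℝ²} {k t : ℝ}
    (hT : HasDerivAt T (k • rot (T t)) t) (hV : HasDerivAt V V' t) :
    HasDerivAt (fun s => ⟪rot (T s), V s⟫) (-(k * ⟪T t, V t⟫) + ⟪rot (T t), V'⟫) t := by
  refine ((hasDerivAt_rot hT).inner ℝ hV).congr_deriv ?_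
  rw [rot_smul, rot_rot, real_inner_smul_left, inner_neg_left]; ring

lemma hasDerivAt_deriv_of_norm_deriv_eq_one {γ : ℝ → ℝ²} {s : Set ℝ} {t : ℝ} (hs : IsOpen s)
    (hγ : ContDiffOn ℝ 2 γ s) (hunit : ∀ t ∈ s, ‖deriv γ t‖ = 1) (ht : t ∈ s) :
    HasDerivAt (deriv γ) (⟪deriv (deriv γ) t, rot (deriv γ t)⟫ • rot (deriv γ t)) t := by
  have hD : HasDerivAt (deriv γ) (deriv (deriv γ) t) t :=
    ((hγ.deriv_of_isOpen hs (m := 1) (by norm_num)).differentiableOn (by norm_num)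
      |>.differentiableAt (hs.mem_nhds ht)).hasDerivAt
  have horth : ⟪deriv γ t, deriv (deriv γ) t⟫ = 0 := by
    have h := hD.norm_sq.eq_of_eventuallyEq (hasDerivAt_const t 1)
      (eventually_of_mem (hs.mem_nhds ht) fun t ht => by simp [hunit t ht])
    linarith
  rw [real_inner_comm]
  convert hD using 1
  exact (eq_inner_rot_smul_rot (hunit t ht) horth).symm

lemma billiard_identity_deriv_first {γ T : ℝ → ℝ²} {ρ : ℝ → ℝ} {q n : ℝ²} {x κ ρ' ε r : ℝ}
    (hγ : HasDerivAt γ (T x) x) (hT : HasDerivAt T (κ • rot (T x)) x) (hρ : HasDerivAt ρ ρ' x)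
    (hκρ : κ * ρ x = 1) (hq : γ x ≠ q)
    (hid : (fun t => ρ t * (ε * ⟪rot (T t), ‖q - γ t‖⁻¹ • (q - γ t)⟫)
        + r * ⟪n, ‖q - γ t‖⁻¹ • (q - γ t)⟫) =ᶠ[𝓝 x] fun t => 2 * ‖q - γ t‖) :
    ε * ρ' * ⟪rot (T x), ‖q - γ x‖⁻¹ • (q - γ x)⟫ + (4 - ε) * ⟪T x, ‖q - γ x‖⁻¹ • (q - γ x)⟫
      = r * ⟪n, T x⟫ / ‖q - γ x‖ := by
  have hw : HasDerivAt (fun t => q - γ t) (-T x) x := hγ.const_sub q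
  have hw0 : q - γ x ≠ 0 := sub_ne_zero.2 hq.symm
  have hu := hw.inv_norm_smul hw0
  have hderiv := ((hρ.mul ((hT.inner_rot_of_frenet hu).const_mul ε)).add
    (((hasDerivAt_const x n).inner ℝ hu).const_mul r)).eq_of_eventuallyEq
    ((hw.norm_of_ne_zero hw0).const_mul 2) hid
  have hid₀ := hid.eq_of_nhds
  set L := ‖q - γ x‖
  have hL : L ≠ 0 := norm_ne_zero_iff.2 hw0
  set u := L⁻¹ • (q - γ x)
  simp only [inner_sub_right, real_inner_smul_right, inner_neg_left, inner_neg_right,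
    inner_rot_self, inner_zero_left] at hderiv hid₀
  linear_combination hderiv - ⟪T x, u⟫ * L⁻¹ * hid₀ + ε * ⟪T x, u⟫ * hκρ
    - 2 * ⟪T x, u⟫ * mul_inv_cancel₀ hL

lemma billiard_identity_deriv_second {γ T : ℝ → ℝ²} {ρ : ℝ → ℝ} {p v : ℝ²} {y κ ρ' a b ε : ℝ}
    (hγ : HasDerivAt γ (T y) y) (hT : HasDerivAt T (κ • rot (T y)) y) (hρ : HasDerivAt ρ ρ' y)
    (hκρ : κ * ρ y = 1) (hp : γ y ≠ p)
    (hid : (fun t => a * ⟪rot v, ‖γ t - p‖⁻¹ • (γ t - p)⟫ + b * ⟪v, ‖γ t - p‖⁻¹ • (γ t - p)⟫)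
      =ᶠ[𝓝 y] fun t => ε * ρ t * ⟪rot (T t), v⟫ / ‖γ t - p‖) :
    (b + ε) * ⟪T y, v⟫ = (a + ε * ρ') * ⟪rot (T y), v⟫ := by
  have hw : HasDerivAt (fun t => γ t - p) (T y) y := hγ.sub_const p
  have hw0 : γ y - p ≠ 0 := sub_ne_zero.2 hp
  have hu := hw.inv_norm_smul hw0
  have hLd := hw.norm_of_ne_zero hw0
  have hderiv := ((((hasDerivAt_const y (rot v)).inner ℝ hu).const_mul a).add
    (((hasDerivAt_const y v).inner ℝ hu).const_mul b)).eq_of_eventuallyEq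
    (((hρ.const_mul ε).mul (hT.inner_rot_of_frenet (hasDerivAt_const y v))).div hLd
      (norm_ne_zero_iff.2 hw0)) hid
  have hid₀ := hid.eq_of_nhds
  set L := ‖γ y - p‖
  have hL : L ≠ 0 := norm_ne_zero_iff.2 hw0
  set u := L⁻¹ • (γ y - p)
  have hS : ⟪rot v, T y⟫ = -⟪rot (T y), v⟫ := by rw [inner_rot_left, real_inner_comm]
  simp only [inner_sub_right, real_inner_smul_right, inner_zero_left, inner_zero_right,
    Pi.mul_apply, hS, real_inner_comm (T y) v] at hderiv hid₀
  field_simp at hderiv hid₀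
  refine mul_left_cancel₀ hL ?_
  linear_combination hderiv + ⟪T y, u⟫ * hid₀ - ε * L * ⟪T y, v⟫ * hκρ

lemma hasDerivAt_cot_of_frenet {T : ℝ → ℝ²} {v : ℝ²} {κ y : ℝ}
    (hT : HasDerivAt T (κ • rot (T y)) y) (hTu : ‖T y‖ = 1) (hv : ‖v‖ = 1)
    (hS : ⟪rot (T y), v⟫ ≠ 0) :
    HasDerivAt (fun t => ⟪T t, v⟫ / ⟪rot (T t), v⟫) (κ / ⟪rot (T y), v⟫ ^ 2) y := by
  have hsq := inner_sq_add_inner_rot_sq (T y) v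
  rw [hTu, hv] at hsq
  refine ((hT.inner_of_frenet (hasDerivAt_const y v)).div
    (hT.inner_rot_of_frenet (hasDerivAt_const y v)) hS).congr_deriv ?_
  simp only [inner_zero_right, add_zero]
  linear_combination κ * hsq / ⟪rot (T y), v⟫ ^ 2

section SeparatedCotangent

variable {T0 T1 : ℝ → ℝ²} {κ0 κ1 f g : ℝ → ℝ} {s0 s1 : Set ℝ} {K : ℝ}

lemma sq_inner_rot_eq_of_cot_eq_add (hs1 : IsOpen s1)
    (hT1 : ∀ y ∈ s1, HasDerivAt T1 (κ1 y • rot (T1 y)) y)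
    (hunit0 : ∀ x ∈ s0, ‖T0 x‖ = 1) (hunit1 : ∀ y ∈ s1, ‖T1 y‖ = 1)
    (hκ1 : ∀ y ∈ s1, κ1 y ≠ 0) (hK : K ≠ 0) (hS : ∀ x ∈ s0, ∀ y ∈ s1, ⟪rot (T1 y), T0 x⟫ ≠ 0)
    (h : ∀ x ∈ s0, ∀ y ∈ s1, K * ⟪T1 y, T0 x⟫ = (f x + g y) * ⟪rot (T1 y), T0 x⟫)
    {x x' y : ℝ} (hx : x ∈ s0) (hx' : x' ∈ s0) (hy : y ∈ s1) :
    ⟪rot (T1 y), T0 x⟫ ^ 2 = ⟪rot (T1 y), T0 x'⟫ ^ 2 := by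
  have hcot {x} (hx : x ∈ s0) := hasDerivAt_cot_of_frenet (hT1 y hy) (hunit1 y hy)
    (hunit0 x hx) (hS x hx y hy)
  -- the difference of the cotangents at `(x, y)` and `(x', y)` is `(f x - f x') / K`
  have hconst := ((hcot hx).sub (hcot hx')).eq_of_eventuallyEq
    (hasDerivAt_const y ((f x - f x') / K))
    (eventually_of_mem (hs1.mem_nhds hy) fun t ht => by
      rw [Pi.sub_apply, div_sub_div _ _ (hS x hx t ht) (hS x' hx' t ht),
        div_eq_div_iff (mul_ne_zero (hS x hx t ht) (hS x' hx' t ht)) hK]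
      linear_combination ⟪rot (T1 t), T0 x'⟫ * h x hx t ht - ⟪rot (T1 t), T0 x⟫ * h x' hx' t ht)
  rw [sub_eq_zero, div_eq_div_iff (pow_ne_zero 2 (hS x hx y hy))
    (pow_ne_zero 2 (hS x' hx' y hy))] at hconst
  exact (mul_left_cancel₀ (hκ1 y hy) hconst).symm

lemma not_forall_cot_tangent_angle_eq_add (hs0 : IsOpen s0) (hs1 : IsOpen s1)
    (hne0 : s0.Nonempty) (hne1 : s1.Nonempty) (hT0 : ∀ x ∈ s0, HasDerivAt T0 (κ0 x • rot (T0 x)) x)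
    (hT1 : ∀ y ∈ s1, HasDerivAt T1 (κ1 y • rot (T1 y)) y)
    (hunit0 : ∀ x ∈ s0, ‖T0 x‖ = 1) (hunit1 : ∀ y ∈ s1, ‖T1 y‖ = 1)
    (hκ0 : ∀ x ∈ s0, κ0 x ≠ 0) (hκ1 : ∀ y ∈ s1, κ1 y ≠ 0) (hK : K ≠ 0) :
    ¬ ∀ x ∈ s0, ∀ y ∈ s1, K * ⟪T1 y, T0 x⟫ = (f x + g y) * ⟪rot (T1 y), T0 x⟫ := by
  intro h
  have hS : ∀ x ∈ s0, ∀ y ∈ s1, ⟪rot (T1 y), T0 x⟫ ≠ 0 := by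
    intro x hx y hy hS
    have hC : ⟪T1 y, T0 x⟫ = 0 := by simpa [hS, hK] using h x hx y hy
    simpa [hS, hC, hunit0 x hx, hunit1 y hy] using inner_sq_add_inner_rot_sq (T1 y) (T0 x)
  have hSx : ∀ x ∈ s0, ∀ y ∈ s1,
      HasDerivAt (fun t => ⟪rot (T1 y), T0 t⟫) (κ0 x * ⟪T1 y, T0 x⟫) x := by
    intro x hx y hy
    refine ((hasDerivAt_const x (rot (T1 y))).inner ℝ (hT0 x hx)).congr_deriv ?_
    rw [real_inner_smul_right, inner_rot_rot, inner_zero_left, add_zero]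
  have hCx : ∀ x ∈ s0, ∀ y ∈ s1,
      HasDerivAt (fun t => ⟪T1 y, T0 t⟫) (-(κ0 x * ⟪rot (T1 y), T0 x⟫)) x := by
    intro x hx y hy
    refine ((hasDerivAt_const x (T1 y)).inner ℝ (hT0 x hx)).congr_deriv ?_
    rw [real_inner_smul_right, inner_rot_left (T1 y), inner_zero_left, add_zero]; ring
  have hC : ∀ x ∈ s0, ∀ y ∈ s1, ⟪T1 y, T0 x⟫ = 0 := by
    intro x hx y hy
    have hconst := ((hSx x hx y hy).pow 2).eq_of_eventuallyEq
      (hasDerivAt_const x (⟪rot (T1 y), T0 x⟫ ^ 2))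
      (eventually_of_mem (hs0.mem_nhds hx) fun t ht =>
        sq_inner_rot_eq_of_cot_eq_add hs1 hT1 hunit0 hunit1 hκ1 hK hS h ht hx hy)
    simpa [hκ0 x hx, hS x hx y hy] using hconst
  obtain ⟨x, hx⟩ := hne0
  obtain ⟨y, hy⟩ := hne1
  have hconst := (hCx x hx y hy).eq_of_eventuallyEq (hasDerivAt_const x 0)
    (eventually_of_mem (hs0.mem_nhds hx) fun t ht => hC t ht y hy)
  simp [hκ0 x hx, hS x hx y hy] at hconst

end SeparatedCotangent

lemma exists_sign_sqrt_one_sub_inner_sq {α : Type*} [TopologicalSpace α] {P : Set α}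
    {T U : α → ℝ²} (hP : IsPreconnected P) (hT : ContinuousOn T P) (hU : ContinuousOn U P)
    (hTu : ∀ p ∈ P, ‖T p‖ = 1) (hUu : ∀ p ∈ P, ‖U p‖ = 1) (hang : ∀ p ∈ P, |⟪T p, U p⟫| < 1) :
    ∃ ε : ℝ, (ε = 1 ∨ ε = -1) ∧ ∀ p ∈ P, √(1 - ⟪T p, U p⟫ ^ 2) = ε * ⟪rot (T p), U p⟫ := by
  have hsq : ∀ p ∈ P, 1 - ⟪T p, U p⟫ ^ 2 = ⟪rot (T p), U p⟫ ^ 2 := fun p hp => by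
    have h := inner_sq_add_inner_rot_sq (T p) (U p)
    rw [hTu p hp, hUu p hp] at h
    linear_combination -h
  have hrotT : ContinuousOn (fun p => rot (T p)) P := rotCLM.continuous.comp_continuousOn hT
  rcases hP.eq_or_eq_neg_of_sq_eq (f := fun p => √(1 - ⟪T p, U p⟫ ^ 2))
    (continuousOn_const.sub ((hT.inner hU).pow 2)).sqrt (hrotT.inner hU)
    (fun p hp => by
      simp only [Pi.pow_apply]
      rw [Real.sq_sqrt (by rw [hsq p hp]; positivity), hsq p hp])
    (fun {p} hp h0 => by
      have := hsq p hp
      rw [h0] at this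
      nlinarith [abs_lt.1 (hang p hp)]) with h | h
  · exact ⟨1, Or.inl rfl, fun p hp => by simpa using h hp⟩
  · exact ⟨-1, Or.inr rfl, fun p hp => by simpa using h hp⟩

lemma continuousOn_inv_norm_smul_sub {F : Type*} [NormedAddCommGroup F] [NormedSpace ℝ F]
    {γ0 γ1 : ℝ → F} {s0 s1 : Set ℝ} (h0 : ContinuousOn γ0 s0) (h1 : ContinuousOn γ1 s1)
    (hne : ∀ x ∈ s0, ∀ y ∈ s1, γ0 x ≠ γ1 y) :
    ContinuousOn (fun p : ℝ × ℝ => ‖γ1 p.2 - γ0 p.1‖⁻¹ • (γ1 p.2 - γ0 p.1)) (s0 ×ˢ s1) := by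
  have hw : ContinuousOn (fun p : ℝ × ℝ => γ1 p.2 - γ0 p.1) (s0 ×ˢ s1) :=
    (h1.comp continuous_snd.continuousOn fun _ hp => hp.2).sub
      (h0.comp continuous_fst.continuousOn fun _ hp => hp.1)
  exact (hw.norm.inv₀ fun p hp => norm_ne_zero_iff.2 (sub_ne_zero.2
    (hne p.1 hp.1 p.2 hp.2).symm)).smul hw

structure IsFrenetArc (s : Set ℝ) (γ : ℝ → ℝ²) (κ : ℝ → ℝ) : Prop where
  isOpen : IsOpen s
  hasDerivAt : ∀ t ∈ s, HasDerivAt γ (deriv γ t) t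
  norm_deriv : ∀ t ∈ s, ‖deriv γ t‖ = 1
  hasDerivAt_deriv : ∀ t ∈ s, HasDerivAt (deriv γ) (κ t • rot (deriv γ t)) t
  ne_zero : ∀ t ∈ s, κ t ≠ 0
  differentiableAt_inv : ∀ t ∈ s, DifferentiableAt ℝ (fun t => (κ t)⁻¹) t

namespace IsFrenetArc

variable {s s0 s1 : Set ℝ} {γ γ0 γ1 : ℝ → ℝ²} {κ κ0 κ1 : ℝ → ℝ}

lemma of_contDiffOn (hs : IsOpen s) (hγ : ContDiffOn ℝ 2 γ s) (hunit : ∀ t ∈ s, ‖deriv γ t‖ = 1)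
    (hκ : ∀ t ∈ s, κ t = ⟪deriv (deriv γ) t, rot (deriv γ t)⟫) (hκne : ∀ t ∈ s, κ t ≠ 0)
    (hρ : DifferentiableOn ℝ (fun t => (κ t)⁻¹) s) : IsFrenetArc s γ κ where
  isOpen := hs
  hasDerivAt t ht :=
    (hγ.differentiableOn (by norm_num) |>.differentiableAt (hs.mem_nhds ht)).hasDerivAt
  norm_deriv := hunit
  hasDerivAt_deriv t ht := by
    simpa only [hκ t ht] using hasDerivAt_deriv_of_norm_deriv_eq_one hs hγ hunit ht
  ne_zero := hκne
  differentiableAt_inv t ht := hρ.differentiableAt (hs.mem_nhds ht)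

lemma continuousOn_deriv (h : IsFrenetArc s γ κ) : ContinuousOn (deriv γ) s :=
  fun t ht => (h.hasDerivAt_deriv t ht).continuousAt.continuousWithinAt

lemma cot_tangent_angle_eq_add (h0 : IsFrenetArc s0 γ0 κ0) (h1 : IsFrenetArc s1 γ1 κ1)
    (hne : ∀ x ∈ s0, ∀ y ∈ s1, γ0 x ≠ γ1 y) {ε0 ε1 : ℝ}
    (hid : ∀ x ∈ s0, ∀ y ∈ s1,
      (κ0 x)⁻¹ * (ε0 * ⟪rot (deriv γ0 x), ‖γ1 y - γ0 x‖⁻¹ • (γ1 y - γ0 x)⟫) +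
        (κ1 y)⁻¹ * (ε1 * ⟪rot (deriv γ1 y), ‖γ1 y - γ0 x‖⁻¹ • (γ1 y - γ0 x)⟫) =
      2 * ‖γ1 y - γ0 x‖)
    {x y : ℝ} (hx : x ∈ s0) (hy : y ∈ s1) :
    (4 - ε0 + ε1) * ⟪deriv γ1 y, deriv γ0 x⟫ =
      (ε0 * deriv (fun t => (κ0 t)⁻¹) x + ε1 * deriv (fun t => (κ1 t)⁻¹) y) *
        ⟪rot (deriv γ1 y), deriv γ0 x⟫ := by
  have hfirst {y} (hy : y ∈ s1) :=
    billiard_identity_deriv_first (ε := ε0) (r := ε1 * (κ1 y)⁻¹) (n := rot (deriv γ1 y))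
      (h0.hasDerivAt x hx) (h0.hasDerivAt_deriv x hx) (h0.differentiableAt_inv x hx).hasDerivAt
      (mul_inv_cancel₀ (h0.ne_zero x hx)) (hne x hx y hy)
      (eventually_of_mem (h0.isOpen.mem_nhds hx) fun t ht => by
        linear_combination hid t ht y hy)
  exact billiard_identity_deriv_second (h1.hasDerivAt y hy) (h1.hasDerivAt_deriv y hy)
    (h1.differentiableAt_inv y hy).hasDerivAt (mul_inv_cancel₀ (h1.ne_zero y hy))
    (hne x hx y hy).symm (eventually_of_mem (h1.isOpen.mem_nhds hy) fun t ht => hfirst ht)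

end IsFrenetArc

/-- There is no pair of `C³` unit-speed planar arcs `γ₀, γ₁` (with nonvanishing
signed curvatures, `ρ = κ⁻¹` of class `C¹`, chord-tangent angles in `(0,π)`)
satisfying `ρ(s₀) sin α₀ + ρ(s₁) sin α₁ = 2 l(s₀,s₁)` identically on a product
of (nonempty) open intervals. -/
theorem no_billiard_identity (a0 b0 a1 b1 : ℝ) (h01 : a0 < b0) (h11 : a1 < b1)
    (γ0 γ1 : ℝ → EuclideanSpace ℝ (Fin 2)) (κ0 κ1 : ℝ → ℝ)
    (hγ0 : ContDiffOn ℝ 3 γ0 (Ioo a0 b0)) (hγ1 : ContDiffOn ℝ 3 γ1 (Ioo a1 b1))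
    (hunit0 : ∀ s ∈ Ioo a0 b0, ‖deriv γ0 s‖ = 1)
    (hunit1 : ∀ s ∈ Ioo a1 b1, ‖deriv γ1 s‖ = 1)
    (hκ0 : ∀ s ∈ Ioo a0 b0, κ0 s = ⟪deriv (deriv γ0) s, rot (deriv γ0 s)⟫)
    (hκ1 : ∀ s ∈ Ioo a1 b1, κ1 s = ⟪deriv (deriv γ1) s, rot (deriv γ1 s)⟫)
    (hκ0ne : ∀ s ∈ Ioo a0 b0, κ0 s ≠ 0) (hκ1ne : ∀ s ∈ Ioo a1 b1, κ1 s ≠ 0)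
    (hρ0 : ContDiffOn ℝ 1 (fun s => (κ0 s)⁻¹) (Ioo a0 b0))
    (hρ1 : ContDiffOn ℝ 1 (fun s => (κ1 s)⁻¹) (Ioo a1 b1))
    (hne : ∀ s0 ∈ Ioo a0 b0, ∀ s1 ∈ Ioo a1 b1, γ0 s0 ≠ γ1 s1)
    (hang0 : ∀ s0 ∈ Ioo a0 b0, ∀ s1 ∈ Ioo a1 b1,
      |⟪deriv γ0 s0, ‖γ1 s1 - γ0 s0‖⁻¹ • (γ1 s1 - γ0 s0)⟫| < 1)
    (hang1 : ∀ s0 ∈ Ioo a0 b0, ∀ s1 ∈ Ioo a1 b1,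
      |⟪deriv γ1 s1, ‖γ1 s1 - γ0 s0‖⁻¹ • (γ1 s1 - γ0 s0)⟫| < 1)
    (hiden : ∀ s0 ∈ Ioo a0 b0, ∀ s1 ∈ Ioo a1 b1,
      (κ0 s0)⁻¹ *
          Real.sqrt (1 - ⟪deriv γ0 s0, ‖γ1 s1 - γ0 s0‖⁻¹ • (γ1 s1 - γ0 s0)⟫ ^ 2) +
        (κ1 s1)⁻¹ *
          Real.sqrt (1 - ⟪deriv γ1 s1, ‖γ1 s1 - γ0 s0‖⁻¹ • (γ1 s1 - γ0 s0)⟫ ^ 2) =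
      2 * ‖γ1 s1 - γ0 s0‖) :
    False := by
  have h0 := IsFrenetArc.of_contDiffOn isOpen_Ioo (hγ0.of_le (by norm_num)) hunit0 hκ0 hκ0ne
    (hρ0.differentiableOn (by norm_num))
  have h1 := IsFrenetArc.of_contDiffOn isOpen_Ioo (hγ1.of_le (by norm_num)) hunit1 hκ1 hκ1ne
    (hρ1.differentiableOn (by norm_num))
  have hP : IsPreconnected (Ioo a0 b0 ×ˢ Ioo a1 b1) := isPreconnected_Ioo.prod isPreconnected_Ioo
  have hU := continuousOn_inv_norm_smul_sub hγ0.continuousOn hγ1.continuousOn hne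
  have hUu (p) (hp : p ∈ Ioo a0 b0 ×ˢ Ioo a1 b1) :=
    norm_smul_inv_norm (𝕜 := ℝ) (sub_ne_zero.2 (hne p.1 hp.1 p.2 hp.2).symm)
  obtain ⟨ε0, hε0, hsin0⟩ := exists_sign_sqrt_one_sub_inner_sq hP
    (h0.continuousOn_deriv.comp continuous_fst.continuousOn fun _ hp => hp.1) hU
    (fun p hp => hunit0 p.1 hp.1) hUu (fun p hp => hang0 p.1 hp.1 p.2 hp.2)
  obtain ⟨ε1, hε1, hsin1⟩ := exists_sign_sqrt_one_sub_inner_sq hP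
    (h1.continuousOn_deriv.comp continuous_snd.continuousOn fun _ hp => hp.2) hU
    (fun p hp => hunit1 p.2 hp.2) hUu (fun p hp => hang1 p.1 hp.1 p.2 hp.2)
  have hK : (4 : ℝ) - ε0 + ε1 ≠ 0 := by
    rcases hε0 with rfl | rfl <;> rcases hε1 with rfl | rfl <;> norm_num
  refine not_forall_cot_tangent_angle_eq_add (f := fun x => ε0 * deriv (fun t => (κ0 t)⁻¹) x)
    (g := fun y => ε1 * deriv (fun t => (κ1 t)⁻¹) y) h0.isOpen h1.isOpen (nonempty_Ioo.2 h01)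
    (nonempty_Ioo.2 h11) h0.hasDerivAt_deriv h1.hasDerivAt_deriv hunit0 hunit1 hκ0ne hκ1ne hK
    fun x hx y hy => h0.cot_tangent_angle_eq_add h1 hne (fun s0 hs0 s1 hs1 => ?_) hx hy
  have hsin0 := hsin0 (s0, s1) ⟨hs0, hs1⟩
  have hsin1 := hsin1 (s0, s1) ⟨hs0, hs1⟩
  dsimp only [Function.comp_apply] at hsin0 hsin1
  rw [← hsin0, ← hsin1]
  exact hiden s0 hs0 s1 hs1
end

section
/- Suppose along an n-periodic billiard orbit (n = 2m even) the relations l_i = λ_i + λ_{i+1} hold cyclically, where λ_i = sin α_i/(2κ_i) > 0 and l_i > 0 are the side lengths. Then the orbit is degenerate (i.e., ∏(x_i - λ_i) is constant equal to ±∏λ_i for all x_0) if and only if λ_0 λ_2 ⋯ λ_{2m-2} = λ_1 λ_3 ⋯ λ_{2m-1}. -/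
/-!
Pairing consecutive factors, the recurrence gives
`(x_{2k} - λ_{2k}) (x_{2k+1} - λ_{2k+1}) = -λ_{2k+1}²`, so along every orbit
`∏ (xᵢ - λᵢ) = (-1)^m (λ₁λ₃⋯λ_{2m-1})²`, a constant. Comparing it with
`± ∏ λᵢ = ± (λ₀λ₂⋯λ_{2m-2}) (λ₁λ₃⋯λ_{2m-1})` and cancelling one positive factor
`λ₁λ₃⋯λ_{2m-1}` leaves the product identity. Orbits exist, e.g. starting from
`x₀ = λ₀ + 1`, so the identity is also necessary.
-/

open Finset

theorem Finset.prod_range_two_mul {M : Type*} [CommMonoid M] (n : ℕ) (f : ℕ → M) :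
    ∏ i ∈ range (2 * n), f i = ∏ k ∈ range n, f (2 * k) * f (2 * k + 1) := by
  induction n with
  | zero => simp
  | succ n ih =>
    rw [Nat.mul_succ, prod_range_succ, prod_range_succ, ih, prod_range_succ, mul_assoc]

section Focusing

variable {K : Type*} [Field K]

theorem prod_sub_eq_neg_one_pow_mul_sq (m : ℕ) (lam x : ℕ → K) (hne : ∀ i < 2 * m, x i ≠ lam i)
    (hrec : ∀ i, i + 1 < 2 * m →
      x (i + 1) - lam (i + 1) = -lam (i + 1) ^ 2 / (x i - lam i)) :
    ∏ i ∈ range (2 * m), (x i - lam i) = (-1) ^ m * (∏ k ∈ range m, lam (2 * k + 1)) ^ 2 := by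
  have hpair : ∀ k ∈ range m,
      (x (2 * k) - lam (2 * k)) * (x (2 * k + 1) - lam (2 * k + 1)) =
        -1 * lam (2 * k + 1) ^ 2 := by
    intro k hk
    have hk : k < m := mem_range.mp hk
    rw [hrec (2 * k) (by omega), mul_div_cancel₀ _ (sub_ne_zero.mpr (hne (2 * k) (by omega)))]
    ring
  rw [prod_range_two_mul, prod_congr rfl hpair, prod_mul_distrib, prod_const, card_range,
    prod_pow]

/-- The deviations `yᵢ = xᵢ - λᵢ` of the focusing orbit starting at `x₀ = λ₀ + 1`. -/
def focusingDeviation (lam : ℕ → K) : ℕ → K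
  | 0 => 1
  | i + 1 => -lam (i + 1) ^ 2 / focusingDeviation lam i

theorem focusingDeviation_ne_zero (lam : ℕ → K) (hlam : ∀ i, lam i ≠ 0) (i : ℕ) :
    focusingDeviation lam i ≠ 0 := by
  induction i with
  | zero => exact one_ne_zero
  | succ i ih => exact div_ne_zero (neg_ne_zero.mpr (pow_ne_zero 2 (hlam _))) ih

theorem exists_focusing_orbit (lam : ℕ → K) (hlam : ∀ i, lam i ≠ 0) :
    ∃ x : ℕ → K, (∀ i, x i ≠ lam i) ∧
      ∀ i, x (i + 1) - lam (i + 1) = -lam (i + 1) ^ 2 / (x i - lam i) := by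
  refine ⟨fun i ↦ lam i + focusingDeviation lam i, fun i ↦ ?_, fun i ↦ ?_⟩
  · simpa using focusingDeviation_ne_zero lam hlam i
  · simp only [add_sub_cancel_left]
    rfl

end Focusing

theorem neg_one_pow_mul_sq_eq_mul_or_eq_neg_iff {K : Type*} [Field K] [LinearOrder K]
    [IsStrictOrderedRing K] {a b : K} (ha : 0 ≤ a) (hb : 0 < b) (m : ℕ) :
    ((-1) ^ m * b ^ 2 = a * b ∨ (-1) ^ m * b ^ 2 = -(a * b)) ↔ a = b := by
  rw [← sq_eq_sq_iff_eq_or_eq_neg, mul_pow, ← pow_mul, mul_comm m, pow_mul, neg_one_sq, one_pow,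
    one_mul, sq_eq_sq₀ (by positivity) (mul_nonneg ha hb.le), sq, mul_left_inj' hb.ne', eq_comm]

theorem degenerate_iff_product_identity_general (m : ℕ)
    (lam : ℕ → ℝ) (hpos : ∀ i, 0 < lam i) :
    (∀ x : ℕ → ℝ, (∀ i < 2 * m, x i ≠ lam i) →
      (∀ i, i + 1 < 2 * m →
        x (i + 1) - lam (i + 1) = -(lam (i + 1)) ^ 2 / (x i - lam i)) →
      (∏ i ∈ Finset.range (2 * m), (x i - lam i) =
          ∏ i ∈ Finset.range (2 * m), lam i ∨
        ∏ i ∈ Finset.range (2 * m), (x i - lam i) =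
          -∏ i ∈ Finset.range (2 * m), lam i)) ↔
    ∏ k ∈ Finset.range m, lam (2 * k) = ∏ k ∈ Finset.range m, lam (2 * k + 1) := by
  have hprod_pos : ∀ f : ℕ → ℕ, 0 < ∏ k ∈ range m, lam (f k) := fun f ↦ prod_pos fun _ _ ↦ hpos _
  have hsplit := prod_range_two_mul m lam
  rw [prod_mul_distrib] at hsplit
  have hcancel := neg_one_pow_mul_sq_eq_mul_or_eq_neg_iff (hprod_pos (2 * ·)).le
    (hprod_pos (2 * · + 1)) m
  obtain ⟨x₀, hne₀, hrec₀⟩ := exists_focusing_orbit lam fun i ↦ (hpos i).ne'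
  constructor
  · intro H
    have H₀ := H x₀ (fun i _ ↦ hne₀ i) (fun i _ ↦ hrec₀ i)
    rw [prod_sub_eq_neg_one_pow_mul_sq m lam x₀ (fun i _ ↦ hne₀ i) (fun i _ ↦ hrec₀ i),
      hsplit] at H₀
    exact hcancel.mp H₀
  · intro h x hne hrec
    rw [prod_sub_eq_neg_one_pow_mul_sq m lam x hne hrec, hsplit]
    exact hcancel.mpr h

/-- For an `n`-periodic orbit with `n = 2m` even, `λᵢ > 0` cyclic, side lengths
`lᵢ = λᵢ + λ_{i+1}` (so the focusing recurrence reads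
`x_{i+1} - λ_{i+1} = -λ_{i+1}²/(xᵢ - λᵢ)`), the orbit is degenerate — i.e.
`∏(xᵢ - λᵢ) = ± ∏ λᵢ` identically in the free initial value `x₀` — if and only
if `λ₀λ₂⋯λ_{2m-2} = λ₁λ₃⋯λ_{2m-1}`. -/
theorem degenerate_iff_product_identity (m : ℕ) (hm : 1 ≤ m)
    (lam : ℕ → ℝ) (hpos : ∀ i, 0 < lam i) :
    (∀ x : ℕ → ℝ, (∀ i < 2 * m, x i ≠ lam i) →
      (∀ i, i + 1 < 2 * m →
        x (i + 1) - lam (i + 1) = -(lam (i + 1)) ^ 2 / (x i - lam i)) →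
      (∏ i ∈ Finset.range (2 * m), (x i - lam i) =
          ∏ i ∈ Finset.range (2 * m), lam i ∨
        ∏ i ∈ Finset.range (2 * m), (x i - lam i) =
          -∏ i ∈ Finset.range (2 * m), lam i)) ↔
    ∏ k ∈ Finset.range m, lam (2 * k) = ∏ k ∈ Finset.range m, lam (2 * k + 1) :=
  degenerate_iff_product_identity_general m lam hpos
end

section
/- If the recurrences x_{i+1} - λ_{i+1} = -λ_{i+1}²/((x_i - λ_i) - c_i) hold with λ_i ≠ 0, and the map x_0 ↦ x_2 is affine (fractional-linear with zero lower-left matrix entry), then c_1 = l_1 - λ_1 - λ_2 = 0, i.e., the offset in the second step vanishes. -/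
/-!
With `t = x₀ - λ₀ - c₀` the two-step map reads `x₂ = λ₂ + λ₂² · t / (λ₁² + c₁ t)`. For `c₁ ≠ 0`
this fractional-linear map has a genuine pole and cannot be affine: at the equally spaced points
`t = n λ₁² / c₁`, `n = 1, 2, 3`, the second difference of `t / (λ₁² + c₁ t)` is `-1 / (12 c₁)`,
whereas that of an affine map is `0`.
-/

theorem eq_zero_of_div_eq_affine {K : Type*} [Field K] [CharZero K] {p c a b : K} (hp : p ≠ 0)
    (h : ∀ t ≠ 0, p + c * t ≠ 0 → t / (p + c * t) = a * t + b) : c = 0 := by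
  by_contra hc
  have at_multiple (n : K) (hn : n ≠ 0) (hn1 : 1 + n ≠ 0) :
      n / (c * (1 + n)) = a * (n * p / c) + b := by
    have hden : p + c * (n * p / c) = p * (1 + n) := by field_simp
    rw [← h _ (by positivity) (by rw [hden]; exact mul_ne_zero hp hn1), hden]
    field_simp
  have e1 := at_multiple 1 one_ne_zero (by norm_num)
  have e2 := at_multiple 2 two_ne_zero (by norm_num)
  have e3 := at_multiple 3 three_ne_zero (by norm_num)
  have : (12 * c)⁻¹ = 0 := by linear_combination -(e1 - 2 * e2 + e3)
  simp_all

/-- If the two-step focusing map `x₀ ↦ x₂`, given by the recurrences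
`x_{i+1} - λ_{i+1} = -λ_{i+1}²/((xᵢ - λᵢ) - cᵢ)` with `λ₁, λ₂ ≠ 0`, is affine
(agrees with `x₀ ↦ a x₀ + b` wherever defined), then the offset in the second
step vanishes: `c₁ = 0`. -/
theorem two_step_affine_forces_zero_offset (lam0 lam1 lam2 c0 c1 : ℝ)
    (h1 : lam1 ≠ 0) (h2 : lam2 ≠ 0)
    (haff : ∃ a b : ℝ, ∀ x0 : ℝ, x0 - lam0 - c0 ≠ 0 →
      -(lam1 ^ 2) / (x0 - lam0 - c0) - c1 ≠ 0 →
      lam2 + -(lam2 ^ 2) / (-(lam1 ^ 2) / (x0 - lam0 - c0) - c1) = a * x0 + b) :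
    c1 = 0 := by
  obtain ⟨a, b, haff⟩ := haff
  refine eq_zero_of_div_eq_affine (pow_ne_zero 2 h1)
    (a := a / lam2 ^ 2) (b := (a * (lam0 + c0) + b - lam2) / lam2 ^ 2) fun t ht hden ↦ ?_
  have hx0 : t + lam0 + c0 - lam0 - c0 = t := by ring
  have hx1 : -(lam1 ^ 2) / t - c1 = -(lam1 ^ 2 + c1 * t) / t := by field_simp; ring
  have hx2 := haff (t + lam0 + c0) (by rwa [hx0])
    (by rw [hx0, hx1]; exact div_ne_zero (neg_ne_zero.2 hden) ht)
  rw [hx0, hx1] at hx2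
  field_simp at hx2 ⊢
  linear_combination hx2
end
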